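/- arXiv:2409.19437 — 5 statements merged into one kernel-verified Lean document; each statement's English description precedes it below -/
import Mathlib

section
/- For every integer k ≥ 2, the double sum ∑_{ℓ=1}^{k-1} (1/(ℓ(ℓ+1))) · ∑_{t=k-ℓ}^{k-1} 1/(t+1) is at most 2·log(2k)/k. -/
open Finset in
lemma aux_harm (k : ℕ) (hk : 2 ≤ k) :
    ∑ ℓ ∈ Finset.Ico 1 k, (1 : ℝ) / (ℓ + 1) ≤ Real.log k := by
  have h1 : ∑ ℓ ∈ Finset.Ico 1 k, (1 : ℝ) / (ℓ + 1)
      = ∑ j ∈ Finset.Ico 2 (k + 1), (1 : ℝ) / j := by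
    rw [show (2 : ℕ) = 1 + 1 by rfl, ← Finset.sum_Ico_add (fun (j : ℕ) => (1 : ℝ) / j) 1 k 1]
    apply Finset.sum_congr rfl
    intro x _
    push_cast
    ring_nf
  have h2 : (harmonic k : ℝ) = 1 + ∑ j ∈ Finset.Ico 2 (k + 1), (1 : ℝ) / j := by
    rw [harmonic_eq_sum_Icc]
    push_cast
    rw [show Finset.Icc 1 k = Finset.Ico 1 (k + 1) by rfl,
      Finset.sum_eq_sum_Ico_succ_bot (by omega) _]
    simp [one_div]
  have h3 := harmonic_le_one_add_log k
  rw [h1]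
  linarith

theorem double_sum_le_two_log_div (k : ℕ) (hk : 2 ≤ k) :
    ∑ ℓ ∈ Finset.Ico 1 k, (1 / ((ℓ : ℝ) * (ℓ + 1))) *
        ∑ t ∈ Finset.Ico (k - ℓ) k, (1 : ℝ) / (t + 1)
      ≤ 2 * Real.log (2 * k) / k := by
  have hk0 : (0 : ℝ) < k := by positivity
  -- Step 1: bound by ∑ 1/((ℓ+1)(k-ℓ+1))
  have step1 : ∑ ℓ ∈ Finset.Ico 1 k, (1 / ((ℓ : ℝ) * (ℓ + 1))) *
        ∑ t ∈ Finset.Ico (k - ℓ) k, (1 : ℝ) / (t + 1)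
      ≤ ∑ ℓ ∈ Finset.Ico 1 k, 1 / (((ℓ : ℝ) + 1) * ((k : ℝ) - ℓ + 1)) := by
    apply Finset.sum_le_sum
    intro ℓ hℓ
    simp only [Finset.mem_Ico] at hℓ
    obtain ⟨h1, h2⟩ := hℓ
    have hℓ0 : (0 : ℝ) < ℓ := by exact_mod_cast h1
    have hd : (0 : ℝ) < (k : ℝ) - ℓ + 1 := by
      have : (ℓ : ℝ) ≤ k := by exact_mod_cast h2.le
      linarith
    have hinner : ∑ t ∈ Finset.Ico (k - ℓ) k, (1 : ℝ) / (t + 1)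
        ≤ ℓ / ((k : ℝ) - ℓ + 1) := by
      have hcard : (Finset.Ico (k - ℓ) k).card = ℓ := by
        rw [Nat.card_Ico]; omega
      calc ∑ t ∈ Finset.Ico (k - ℓ) k, (1 : ℝ) / (t + 1)
          ≤ ∑ t ∈ Finset.Ico (k - ℓ) k, 1 / ((k : ℝ) - ℓ + 1) := by
            apply Finset.sum_le_sum
            intro t ht
            simp only [Finset.mem_Ico] at ht
            have : ((k - ℓ : ℕ) : ℝ) ≤ t := by exact_mod_cast ht.1
            rw [Nat.cast_sub h2.le] at this
            apply one_div_le_one_div_of_le hd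
            linarith
        _ = ℓ / ((k : ℝ) - ℓ + 1) := by
            rw [Finset.sum_const, hcard, nsmul_eq_mul]; ring
    calc (1 / ((ℓ : ℝ) * (ℓ + 1))) * ∑ t ∈ Finset.Ico (k - ℓ) k, (1 : ℝ) / (t + 1)
        ≤ (1 / ((ℓ : ℝ) * (ℓ + 1))) * (ℓ / ((k : ℝ) - ℓ + 1)) := by
          apply mul_le_mul_of_nonneg_left hinner
          positivity
      _ = 1 / (((ℓ : ℝ) + 1) * ((k : ℝ) - ℓ + 1)) := by
          field_simp
  -- Step 2: partial fractions
  have step2 : ∑ ℓ ∈ Finset.Ico 1 k, 1 / (((ℓ : ℝ) + 1) * ((k : ℝ) - ℓ + 1))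
      = (1 / ((k : ℝ) + 2)) *
        ∑ ℓ ∈ Finset.Ico 1 k, ((1 : ℝ) / (ℓ + 1) + 1 / ((k : ℝ) - ℓ + 1)) := by
    rw [Finset.mul_sum]
    apply Finset.sum_congr rfl
    intro ℓ hℓ
    simp only [Finset.mem_Ico] at hℓ
    have hℓk : (ℓ : ℝ) ≤ k := by exact_mod_cast hℓ.2.le
    have h1 : (0 : ℝ) < (ℓ : ℝ) + 1 := by positivity
    have h2 : (0 : ℝ) < (k : ℝ) - ℓ + 1 := by linarith
    field_simp
    ring
  -- Step 3: reflection
  have step3 : ∑ ℓ ∈ Finset.Ico 1 k, (1 : ℝ) / ((k : ℝ) - ℓ + 1)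
      = ∑ ℓ ∈ Finset.Ico 1 k, (1 : ℝ) / (ℓ + 1) := by
    have := Finset.sum_Ico_reflect (fun j => (1 : ℝ) / (j + 1)) 1 (m := k) (n := k)
      (by omega)
    simp only [Nat.add_sub_cancel, show k + 1 - k = 1 from by omega] at this
    rw [← this]
    apply Finset.sum_congr rfl
    intro ℓ hℓ
    simp only [Finset.mem_Ico] at hℓ
    rw [Nat.cast_sub hℓ.2.le]
  have hS := aux_harm k hk
  have hS0 : (0 : ℝ) ≤ ∑ ℓ ∈ Finset.Ico 1 k, (1 : ℝ) / (ℓ + 1) := by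
    apply Finset.sum_nonneg; intro i _; positivity
  have hlog : Real.log k ≤ Real.log (2 * k) := by
    apply Real.log_le_log (by positivity)
    push_cast; linarith
  have hlog0 : (0 : ℝ) ≤ Real.log (2 * k) := by
    apply Real.log_nonneg
    push_cast
    nlinarith [hk0, (show (1:ℝ) ≤ k by exact_mod_cast Nat.one_le_of_lt hk)]
  calc ∑ ℓ ∈ Finset.Ico 1 k, (1 / ((ℓ : ℝ) * (ℓ + 1))) *
        ∑ t ∈ Finset.Ico (k - ℓ) k, (1 : ℝ) / (t + 1)
      ≤ (1 / ((k : ℝ) + 2)) *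
        ∑ ℓ ∈ Finset.Ico 1 k, ((1 : ℝ) / (ℓ + 1) + 1 / ((k : ℝ) - ℓ + 1)) := by
        rw [← step2]; exact step1
    _ = (1 / ((k : ℝ) + 2)) * (2 * ∑ ℓ ∈ Finset.Ico 1 k, (1 : ℝ) / (ℓ + 1)) := by
        rw [Finset.sum_add_distrib, step3]; ring
    _ ≤ (1 / ((k : ℝ) + 2)) * (2 * Real.log (2 * k)) := by
        apply mul_le_mul_of_nonneg_left _ (by positivity)
        apply mul_le_mul_of_nonneg_left _ (by norm_num)
        exact hS.trans hlog
    _ ≤ (1 / (k : ℝ)) * (2 * Real.log (2 * k)) := by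
        apply mul_le_mul_of_nonneg_right _ (by positivity)
        apply one_div_le_one_div_of_le hk0
        linarith
    _ = 2 * Real.log (2 * k) / k := by ring
end

section
/- Let α_0 ≥ α_1 ≥ ... ≥ α_{k-1} > 0 and let X_0, ..., X_{k-1} be nonnegative reals. Then α_{k-1} X_{k-1} ≤ (1/k) ∑_{t=0}^{k-1} α_t X_t + ∑_{ℓ=1}^{k-1} (1/(ℓ(ℓ+1))) ∑_{t=k-ℓ}^{k-1} α_t (X_t − X_{k-ℓ-1}). -/
theorem last_iterate_sum_bound (k : ℕ) (hk : 1 ≤ k) (α X : ℕ → ℝ)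
    (hα_pos : ∀ t, t < k → 0 < α t)
    (hα_mono : ∀ s t, s ≤ t → t < k → α t ≤ α s)
    (hX : ∀ t, t < k → 0 ≤ X t) :
    α (k - 1) * X (k - 1) ≤
      (1 / k) * ∑ t ∈ Finset.range k, α t * X t +
        ∑ ℓ ∈ Finset.Ico 1 k, (1 / ((ℓ : ℝ) * (ℓ + 1))) *
          ∑ t ∈ Finset.Ico (k - ℓ) k, α t * (X t - X (k - ℓ - 1)) := by
  set S : ℕ → ℝ := fun ℓ => (1 / (ℓ : ℝ)) * ∑ t ∈ Finset.Ico (k - ℓ) k, α t * X t with hSdef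
  -- S 1 = α (k-1) * X (k-1)
  have hS1 : S 1 = α (k - 1) * X (k - 1) := by
    have h : Finset.Ico (k - 1) k = {k - 1} := by
      rw [show k = (k - 1) + 1 by omega]
      simp
    simp [hSdef, h]
  -- S k = (1/k) * ∑ range
  have hSk : S k = (1 / (k : ℝ)) * ∑ t ∈ Finset.range k, α t * X t := by
    simp only [hSdef]
    rw [Nat.sub_self, ← Finset.range_eq_Ico]
  -- telescoping
  have tele : S 1 = S k + ∑ ℓ ∈ Finset.Ico 1 k, (S ℓ - S (ℓ + 1)) := by
    rw [Finset.sum_Ico_eq_sum_range]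
    have h := Finset.sum_range_sub' (fun i => S (1 + i)) (k - 1)
    rw [show (∑ i ∈ Finset.range (k - 1), (S (1 + i) - S (1 + i + 1)))
        = S 1 - S (1 + (k - 1)) from h, show 1 + (k - 1) = k by omega]
    ring
  -- per-term bound
  have key : ∀ ℓ ∈ Finset.Ico 1 k, S ℓ - S (ℓ + 1) ≤
      (1 / ((ℓ : ℝ) * (ℓ + 1))) *
        ∑ t ∈ Finset.Ico (k - ℓ) k, α t * (X t - X (k - ℓ - 1)) := by
    intro ℓ hℓ
    obtain ⟨h1, h2⟩ := Finset.mem_Ico.mp hℓ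
    set m := k - ℓ - 1 with hm
    have hmlt : m < k := by omega
    have hsucc : m + 1 = k - ℓ := by omega
    have hsplit : ∀ f : ℕ → ℝ, ∑ t ∈ Finset.Ico (k - (ℓ + 1)) k, f t
        = f m + ∑ t ∈ Finset.Ico (k - ℓ) k, f t := by
      intro f
      rw [show k - (ℓ + 1) = m by omega, Finset.sum_eq_sum_Ico_succ_bot hmlt, hsucc]
    set A : ℝ := ∑ t ∈ Finset.Ico (k - ℓ) k, α t * X t with hA
    set B : ℝ := ∑ t ∈ Finset.Ico (k - ℓ) k, α t with hB
    have hcard : (Finset.Ico (k - ℓ) k).card = ℓ := by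
      rw [Nat.card_Ico]; omega
    have hBle : B ≤ (ℓ : ℝ) * α m := by
      calc B ≤ ∑ t ∈ Finset.Ico (k - ℓ) k, α m := by
              apply Finset.sum_le_sum
              intro t ht
              obtain ⟨ht1, ht2⟩ := Finset.mem_Ico.mp ht
              exact hα_mono m t (by omega) ht2
        _ = (ℓ : ℝ) * α m := by
              rw [Finset.sum_const, hcard, nsmul_eq_mul]
    have hxm : 0 ≤ X m := hX m hmlt
    have hsum_eq : ∑ t ∈ Finset.Ico (k - ℓ) k, α t * (X t - X m) = A - X m * B := by
      simp only [mul_sub, Finset.sum_sub_distrib, hA, hB]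
      rw [← Finset.sum_mul]
      ring
    have lpos : (0 : ℝ) < ℓ := by exact_mod_cast h1
    have hdiff : S ℓ - S (ℓ + 1)
        = (1 / ((ℓ : ℝ) * (ℓ + 1))) * A - (1 / ((ℓ : ℝ) + 1)) * (α m * X m) := by
      simp only [hSdef]
      rw [hsplit (fun t => α t * X t)]
      push_cast
      field_simp
      ring
    rw [hdiff, hsum_eq]
    have upos : (0 : ℝ) < 1 / ((ℓ : ℝ) * (ℓ + 1)) := by positivity
    have key2 : X m * B ≤ X m * ((ℓ : ℝ) * α m) := mul_le_mul_of_nonneg_left hBle hxm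
    have h3 : (1 / ((ℓ : ℝ) * (ℓ + 1))) * (X m * B)
        ≤ (1 / ((ℓ : ℝ) * (ℓ + 1))) * (X m * ((ℓ : ℝ) * α m)) :=
      mul_le_mul_of_nonneg_left key2 (le_of_lt upos)
    have h4 : (1 / ((ℓ : ℝ) * (ℓ + 1))) * (X m * ((ℓ : ℝ) * α m))
        = (1 / ((ℓ : ℝ) + 1)) * (α m * X m) := by
      field_simp
    rw [h4] at h3
    nlinarith [h3]
  calc α (k - 1) * X (k - 1) = S k + ∑ ℓ ∈ Finset.Ico 1 k, (S ℓ - S (ℓ + 1)) := by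
        rw [← hS1, tele]
    _ ≤ (1 / (k : ℝ)) * ∑ t ∈ Finset.range k, α t * X t +
        ∑ ℓ ∈ Finset.Ico 1 k, (1 / ((ℓ : ℝ) * (ℓ + 1))) *
          ∑ t ∈ Finset.Ico (k - ℓ) k, α t * (X t - X (k - ℓ - 1)) := by
        rw [hSk]
        exact add_le_add_right (Finset.sum_le_sum key) _
end

section
/- Performance difference lemma: for any two feasible policies π and π' on a finite MDP with discount γ ∈ [0,1) and convex per-state regularizer h, and any state s, V^{π'}(s) − V^π(s) = (1/(1−γ)) ∑_{q ∈ S} ψ^π(q, π'(·|q)) κ^{π'}_s(q), where ψ^π(s, p) := ⟨Q^π(s,·), p⟩ − V^π(s) + h^p(s) − h^{π(·|s)}(s) is the advantage function and κ^{π'}_s is the discounted state-visitation distribution of π' started at s. -/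
open scoped BigOperators

section MDP

variable {S A : Type*} [Fintype S] [Fintype A] [DecidableEq S]

/-- A (randomized stationary) policy: a probability distribution over actions at each state. -/
def IsPolicy (π : S → A → ℝ) : Prop := ∀ s, π s ∈ stdSimplex ℝ A

/-- A transition kernel: a probability distribution over next states for each state-action pair. -/
def IsKernel (P : S → A → S → ℝ) : Prop := ∀ s a, P s a ∈ stdSimplex ℝ S

/-- The state-transition matrix induced by policy `π`:
`(polMatrix P π) q s' = Pr{s_{t+1} = s' | s_t = q}` under `a_t ∼ π(·|q)`. -/
noncomputable def polMatrix (P : S → A → S → ℝ) (π : S → A → ℝ) : Matrix S S ℝ :=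
  Matrix.of fun q s' => ∑ a, π q a * P q a s'

/-- Discounted state-visitation distribution
`κ^π_q(s) = (1-γ) ∑_{t=0}^∞ γ^t Pr^π{s_t = s | s_0 = q}`. -/
noncomputable def visit (P : S → A → S → ℝ) (γ : ℝ) (π : S → A → ℝ) (q s : S) : ℝ :=
  (1 - γ) * ∑' t : ℕ, γ ^ t * (polMatrix P π ^ t) q s

/-- State-value function: expected discounted sum of costs plus regularization,
`V^π(s) = ∑_{t=0}^∞ γ^t E[c(s_t,a_t) + h^{π(·|s_t)}(s_t) | s_0 = s]`. -/
noncomputable def valueV (P : S → A → S → ℝ) (c : S → A → ℝ) (h : S → (A → ℝ) → ℝ)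
    (γ : ℝ) (π : S → A → ℝ) (s : S) : ℝ :=
  ∑' t : ℕ, γ ^ t * ∑ q, (polMatrix P π ^ t) s q * ((∑ a, π q a * c q a) + h q (π q))

/-- Action-value function `Q^π(s,a) = c(s,a) + h^{π(·|s)}(s) + γ ∑_{s'} P(s'|s,a) V^π(s')`. -/
noncomputable def valueQ (P : S → A → S → ℝ) (c : S → A → ℝ) (h : S → (A → ℝ) → ℝ)
    (γ : ℝ) (π : S → A → ℝ) (s : S) (a : A) : ℝ :=
  c s a + h s (π s) + γ * ∑ s', P s a s' * valueV P c h γ π s'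

/-- Advantage function `ψ^π(s,p) = ⟨Q^π(s,·), p⟩ − V^π(s) + h^p(s) − h^{π(·|s)}(s)`. -/
noncomputable def adv (P : S → A → S → ℝ) (c : S → A → ℝ) (h : S → (A → ℝ) → ℝ)
    (γ : ℝ) (π : S → A → ℝ) (s : S) (p : A → ℝ) : ℝ :=
  (∑ a, valueQ P c h γ π s a * p a) - valueV P c h γ π s + h s p - h s (π s)

/-- Advantage gap function `g^π(s) = max_{p ∈ Δ_{|A|}} {−ψ^π(s,p)}`. -/
noncomputable def gapFn (P : S → A → S → ℝ) (c : S → A → ℝ) (h : S → (A → ℝ) → ℝ)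
    (γ : ℝ) (π : S → A → ℝ) (s : S) : ℝ :=
  sSup ((fun p => - adv P c h γ π s p) '' stdSimplex ℝ A)

end MDP

section AuxPD

variable {S : Type*} [Fintype S] [DecidableEq S]

lemma pd_pow_nonneg (M : Matrix S S ℝ) (h0 : ∀ i j, 0 ≤ M i j) (t : ℕ) :
    ∀ i j, 0 ≤ (M ^ t) i j := by
  induction t with
  | zero =>
    intro i j
    rw [pow_zero, Matrix.one_apply]
    split <;> norm_num
  | succ t ih =>
    intro i j
    rw [pow_succ, Matrix.mul_apply]
    exact Finset.sum_nonneg fun k _ => mul_nonneg (ih i k) (h0 k j)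

lemma pd_pow_row_sum (M : Matrix S S ℝ) (h1 : ∀ i, ∑ j, M i j = 1) (t : ℕ) :
    ∀ i, ∑ j, (M ^ t) i j = 1 := by
  induction t with
  | zero =>
    intro i
    simp [Matrix.one_apply]
  | succ t ih =>
    intro i
    simp_rw [pow_succ, Matrix.mul_apply]
    rw [Finset.sum_comm]
    calc ∑ k, ∑ j, (M ^ t) i k * M k j
        = ∑ k, (M ^ t) i k * ∑ j, M k j := by
          refine Finset.sum_congr rfl fun k _ => ?_
          rw [Finset.mul_sum]
      _ = ∑ k, (M ^ t) i k := by simp [h1]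
      _ = 1 := ih i

end AuxPD

theorem performance_difference {S A : Type*} [Fintype S] [Fintype A] [DecidableEq S]
    (P : S → A → S → ℝ) (c : S → A → ℝ) (h : S → (A → ℝ) → ℝ) (γ : ℝ)
    (π π' : S → A → ℝ)
    (hP : IsKernel P) (hπ : IsPolicy π) (hπ' : IsPolicy π')
    (hγ0 : 0 ≤ γ) (hγ1 : γ < 1)
    (hconv : ∀ s : S, ConvexOn ℝ (stdSimplex ℝ A) (h s)) :
    ∀ s : S,
      valueV P c h γ π' s - valueV P c h γ π s =
        (1 / (1 - γ)) * ∑ q : S, adv P c h γ π q (π' q) * visit P γ π' s q := by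
  intro s
  classical
  set M : Matrix S S ℝ := polMatrix P π' with hMdef
  set V : S → ℝ := valueV P c h γ π with hVdef
  set r' : S → ℝ := fun q => (∑ a, π' q a * c q a) + h q (π' q) with hr'def
  have hM0 : ∀ i j, 0 ≤ M i j := fun i j =>
    Finset.sum_nonneg fun a _ => mul_nonneg ((hπ' i).1 a) ((hP i a).1 j)
  have hM1 : ∀ i, ∑ j, M i j = 1 := by
    intro i
    show ∑ j, ∑ a, π' i a * P i a j = 1
    rw [Finset.sum_comm]
    calc ∑ a, ∑ j, π' i a * P i a j
        = ∑ a, π' i a * ∑ j, P i a j := by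
          refine Finset.sum_congr rfl fun a _ => ?_
          rw [Finset.mul_sum]
      _ = ∑ a, π' i a := by
          refine Finset.sum_congr rfl fun a _ => ?_
          rw [(hP i a).2, mul_one]
      _ = 1 := (hπ' i).2
  have hPow0 : ∀ t (i j : S), 0 ≤ (M ^ t) i j := fun t => pd_pow_nonneg M hM0 t
  have hPow1 : ∀ t (i : S), ∑ j, (M ^ t) i j = 1 := fun t => pd_pow_row_sum M hM1 t
  have hPowLe : ∀ t (i j : S), (M ^ t) i j ≤ 1 := by
    intro t i j
    have := Finset.single_le_sum (f := fun k => (M ^ t) i k)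
      (fun k _ => hPow0 t i k) (Finset.mem_univ j)
    simpa [hPow1 t i] using this
  have hgeo : Summable (fun t : ℕ => γ ^ t) := summable_geometric_of_lt_one hγ0 hγ1
  have hsum : ∀ (i j : S) (C : ℝ), Summable (fun t : ℕ => γ ^ t * (M ^ t) i j * C) := by
    intro i j C
    apply Summable.mul_right
    refine Summable.of_nonneg_of_le
      (fun t => mul_nonneg (pow_nonneg hγ0 t) (hPow0 t i j)) (fun t => ?_) hgeo
    calc γ ^ t * (M ^ t) i j ≤ γ ^ t * 1 :=
          mul_le_mul_of_nonneg_left (hPowLe t i j) (pow_nonneg hγ0 t)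
      _ = γ ^ t := mul_one _
  have hsumB : ∀ (F : S → ℝ), Summable (fun t : ℕ => γ ^ t * ∑ q, (M ^ t) s q * F q) := by
    intro F
    have he : ∀ t : ℕ, γ ^ t * ∑ q, (M ^ t) s q * F q = ∑ q, γ ^ t * (M ^ t) s q * F q := by
      intro t
      rw [Finset.mul_sum]
      exact Finset.sum_congr rfl fun q _ => (mul_assoc _ _ _).symm
    simp only [he]
    exact summable_sum fun q _ => hsum s q (F q)
  -- advantage identity
  have hadv : ∀ q, adv P c h γ π q (π' q)
      = r' q + γ * ∑ j, M q j * V j - V q := by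
    intro q
    have hMV : ∑ j, M q j * V j
        = ∑ a, π' q a * ∑ s', P q a s' * V s' := by
      show ∑ j, (∑ a, π' q a * P q a j) * V j = _
      simp_rw [Finset.sum_mul]
      rw [Finset.sum_comm]
      refine Finset.sum_congr rfl fun a _ => ?_
      rw [Finset.mul_sum]
      refine Finset.sum_congr rfl fun j _ => by ring
    have hπ1 : ∑ a, π' q a = 1 := (hπ' q).2
    show (∑ a, valueQ P c h γ π q a * π' q a) - V q + h q (π' q) - h q (π q)
        = r' q + γ * ∑ j, M q j * V j - V q
    have hQ : ∑ a, valueQ P c h γ π q a * π' q a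
        = (∑ a, π' q a * c q a) + h q (π q) + γ * ∑ j, M q j * V j := by
      simp only [valueQ, ← hVdef]
      rw [hMV]
      calc ∑ a, (c q a + h q (π q) + γ * ∑ s', P q a s' * V s') * π' q a
          = ∑ a, (π' q a * c q a + π' q a * h q (π q)
              + γ * (π' q a * ∑ s', P q a s' * V s')) := by
            refine Finset.sum_congr rfl fun a _ => by ring
        _ = (∑ a, π' q a * c q a) + (∑ a, π' q a) * h q (π q)
              + γ * ∑ a, π' q a * ∑ s', P q a s' * V s' := by
            rw [Finset.sum_add_distrib, Finset.sum_add_distrib, Finset.sum_mul,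
              Finset.mul_sum]
        _ = _ := by rw [hπ1, one_mul]
    rw [hQ, hr'def]
    ring
  -- the two series
  set Aa : ℕ → ℝ := fun t => γ ^ t * ∑ q, (M ^ t) s q * r' q with hAdef
  set Bb : ℕ → ℝ := fun t => γ ^ t * ∑ q, (M ^ t) s q * V q with hBdef
  have hA : Summable Aa := hsumB r'
  have hB : Summable Bb := hsumB V
  have hBshift : Summable (fun t => Bb (t + 1)) := by
    exact (summable_nat_add_iff 1).mpr hB
  -- per-term identity
  have hkey : ∀ t : ℕ, ∑ q, γ ^ t * (M ^ t) s q * adv P c h γ π q (π' q)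
      = Aa t + Bb (t + 1) - Bb t := by
    intro t
    have e1 : ∑ q, (M ^ t) s q * (γ * ∑ j, M q j * V j)
        = γ * ∑ j, (M ^ (t + 1)) s j * V j := by
      calc ∑ q, (M ^ t) s q * (γ * ∑ j, M q j * V j)
          = ∑ q, ∑ j, γ * ((M ^ t) s q * (M q j * V j)) := by
            refine Finset.sum_congr rfl fun q _ => ?_
            rw [Finset.mul_sum, Finset.mul_sum]
            refine Finset.sum_congr rfl fun j _ => by ring
        _ = ∑ j, ∑ q, γ * ((M ^ t) s q * (M q j * V j)) := Finset.sum_comm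
        _ = γ * ∑ j, (M ^ (t + 1)) s j * V j := by
            rw [Finset.mul_sum]
            refine Finset.sum_congr rfl fun j _ => ?_
            rw [pow_succ, Matrix.mul_apply, Finset.sum_mul, Finset.mul_sum]
            refine Finset.sum_congr rfl fun q _ => by ring
    have split : ∑ q, γ ^ t * (M ^ t) s q * adv P c h γ π q (π' q)
        = γ ^ t * ((∑ q, (M ^ t) s q * r' q)
            + (∑ q, (M ^ t) s q * (γ * ∑ j, M q j * V j))
            - ∑ q, (M ^ t) s q * V q) := by
      rw [← Finset.sum_add_distrib, ← Finset.sum_sub_distrib, Finset.mul_sum]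
      refine Finset.sum_congr rfl fun q _ => ?_
      rw [hadv q]
      ring
    rw [split, e1, hAdef, hBdef]
    simp only []
    rw [pow_succ]
    ring
  have hγne : (1 : ℝ) - γ ≠ 0 := by linarith
  have step1 : (1 / (1 - γ)) * ∑ q : S, adv P c h γ π q (π' q) * visit P γ π' s q
      = ∑ q : S, adv P c h γ π q (π' q) * ∑' t : ℕ, γ ^ t * (M ^ t) s q := by
    rw [Finset.mul_sum]
    refine Finset.sum_congr rfl fun q _ => ?_
    show (1 / (1 - γ)) * (adv P c h γ π q (π' q)
        * ((1 - γ) * ∑' t : ℕ, γ ^ t * (M ^ t) s q)) = _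
    field_simp
  have step2 : ∑ q : S, adv P c h γ π q (π' q) * ∑' t : ℕ, γ ^ t * (M ^ t) s q
      = ∑' t : ℕ, ∑ q, γ ^ t * (M ^ t) s q * adv P c h γ π q (π' q) := by
    have he : ∀ q, adv P c h γ π q (π' q) * ∑' t : ℕ, γ ^ t * (M ^ t) s q
        = ∑' t : ℕ, γ ^ t * (M ^ t) s q * adv P c h γ π q (π' q) := by
      intro q
      rw [← tsum_mul_left]
      exact tsum_congr fun t => by ring
    simp only [he]
    exact (Summable.tsum_finsetSum fun q _ => hsum s q _).symm
  have step3 : ∑' t : ℕ, ∑ q, γ ^ t * (M ^ t) s q * adv P c h γ π q (π' q)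
      = (∑' t, Aa t) + (∑' t, Bb (t + 1)) - ∑' t, Bb t := by
    rw [tsum_congr hkey, Summable.tsum_sub (hA.add hBshift) hB, Summable.tsum_add hA hBshift]
  have hB0 : Bb 0 = V s := by
    simp [hBdef, Matrix.one_apply]
  have hshift : ∑' t, Bb (t + 1) = (∑' t, Bb t) - Bb 0 := by
    have := Summable.tsum_eq_zero_add hB
    linarith
  have hA' : ∑' t, Aa t = valueV P c h γ π' s := by
    rw [hAdef]
    rfl
  rw [step1, step2, step3, hshift, hA', hB0]
  ring
end

section
/- Lower bound via advantage gap: for any policy π on a finite discounted MDP and any state s, g^π(s) ≤ V^π(s) − V^{π*}(s), where g^π(s) := max_{p ∈ Δ_{|A|}} {−ψ^π(s, p)} is the advantage gap function and π* is an optimal policy satisfying V^{π*}(s') ≤ V^{π''}(s') for all policies π'' and states s'. -/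
open scoped BigOperators

set_option linter.unusedSectionVars false

section Helpers

variable {S A : Type*} [Fintype S] [Fintype A] [DecidableEq S]

lemma polMatrix_row_mem {P : S → A → S → ℝ} {π : S → A → ℝ}
    (hP : IsKernel P) (hπ : IsPolicy π) (q : S) : polMatrix P π q ∈ stdSimplex ℝ S := by
  constructor
  · intro s'
    exact Finset.sum_nonneg fun a _ => mul_nonneg ((hπ q).1 a) ((hP q a).1 s')
  · show ∑ s', ∑ a, π q a * P q a s' = 1
    rw [Finset.sum_comm]
    have : ∀ a : A, ∑ s', π q a * P q a s' = π q a := by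
      intro a
      rw [← Finset.mul_sum, (hP q a).2, mul_one]
    simp only [this]
    exact (hπ q).2

lemma row_mem_pow {M : Matrix S S ℝ} (hM : ∀ q, M q ∈ stdSimplex ℝ S) (t : ℕ) (q : S) :
    (M ^ t) q ∈ stdSimplex ℝ S := by
  induction t generalizing q with
  | zero =>
    constructor
    · intro s'
      simp only [pow_zero]
      rw [show (1 : Matrix S S ℝ) q s' = if q = s' then 1 else 0 from Matrix.one_apply]
      split <;> norm_num
    · show ∑ s', (M ^ 0) q s' = 1
      simp [Matrix.one_apply]
  | succ t ih =>
    constructor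
    · intro s'
      rw [pow_succ, Matrix.mul_apply]
      exact Finset.sum_nonneg fun r _ => mul_nonneg ((ih q).1 r) ((hM r).1 s')
    · show ∑ s', (M ^ (t+1)) q s' = 1
      simp only [pow_succ, Matrix.mul_apply]
      rw [Finset.sum_comm]
      have : ∀ r : S, ∑ s', (M ^ t) q r * M r s' = (M ^ t) q r := by
        intro r
        rw [← Finset.mul_sum, (hM r).2, mul_one]
      simp only [this]
      exact (ih q).2

lemma entry_le_one {f : S → ℝ} (hf : f ∈ stdSimplex ℝ S) (s : S) : f s ≤ 1 := by
  rw [← hf.2]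
  exact Finset.single_le_sum (fun i _ => hf.1 i) (Finset.mem_univ s)

lemma summable_entry {M : Matrix S S ℝ} (hM : ∀ q, M q ∈ stdSimplex ℝ S)
    {γ : ℝ} (hγ0 : 0 ≤ γ) (hγ1 : γ < 1) (q s : S) :
    Summable fun t : ℕ => γ ^ t * (M ^ t) q s := by
  refine Summable.of_nonneg_of_le
    (fun t => mul_nonneg (pow_nonneg hγ0 t) ((row_mem_pow hM t q).1 s))
    (fun t => ?_) (summable_geometric_of_lt_one hγ0 hγ1)
  calc γ ^ t * (M ^ t) q s ≤ γ ^ t * 1 :=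
        mul_le_mul_of_nonneg_left (entry_le_one (row_mem_pow hM t q) s) (pow_nonneg hγ0 t)
    _ = γ ^ t := mul_one _

lemma summable_row_dot {M : Matrix S S ℝ} (hM : ∀ q, M q ∈ stdSimplex ℝ S)
    {γ : ℝ} (hγ0 : 0 ≤ γ) (hγ1 : γ < 1) (r : S → ℝ) (s : S) :
    Summable fun t : ℕ => γ ^ t * ∑ q, (M ^ t) s q * r q := by
  refine Summable.of_norm_bounded (g := fun t => γ ^ t * ∑ q, |r q|)
    ((summable_geometric_of_lt_one hγ0 hγ1).mul_right _) fun t => ?_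
  rw [Real.norm_eq_abs, abs_mul, abs_pow, abs_of_nonneg hγ0]
  refine mul_le_mul_of_nonneg_left ?_ (pow_nonneg hγ0 t)
  calc |∑ q, (M ^ t) s q * r q| ≤ ∑ q, |(M ^ t) s q * r q| := Finset.abs_sum_le_sum_abs _ _
    _ ≤ ∑ q, |r q| := by
        refine Finset.sum_le_sum fun q _ => ?_
        rw [abs_mul, abs_of_nonneg ((row_mem_pow hM t s).1 q)]
        calc (M ^ t) s q * |r q| ≤ 1 * |r q| :=
              mul_le_mul_of_nonneg_right (entry_le_one (row_mem_pow hM t s) q) (abs_nonneg _)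
          _ = |r q| := one_mul _

lemma tsum_shift_eq {M : Matrix S S ℝ} (hM : ∀ q, M q ∈ stdSimplex ℝ S)
    {γ : ℝ} (hγ0 : 0 ≤ γ) (hγ1 : γ < 1) (r : S → ℝ) (s : S) :
    (∑' t : ℕ, γ ^ t * ∑ q, (M ^ t) s q * r q)
      = r s + γ * ∑ q, M s q * ∑' t : ℕ, γ ^ t * ∑ q', (M ^ t) q q' * r q' := by
  rw [Summable.tsum_eq_zero_add (summable_row_dot hM hγ0 hγ1 r s)]
  congr 1
  · simp [Matrix.one_apply]
  · have hswap : ∀ q : S, M s q * ∑' t : ℕ, γ ^ t * ∑ q', (M ^ t) q q' * r q'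
        = ∑' t : ℕ, M s q * (γ ^ t * ∑ q', (M ^ t) q q' * r q') := by
      intro q
      rw [tsum_mul_left]
    simp only [hswap]
    rw [← Summable.tsum_finsetSum (fun q _ => (summable_row_dot hM hγ0 hγ1 r q).mul_left (M s q)),
      ← tsum_mul_left]
    congr 1
    ext t
    have : ∑ q, M s q * (γ ^ t * ∑ q', (M ^ t) q q' * r q')
        = γ ^ t * ∑ q', (M ^ (t+1)) s q' * r q' := by
      simp only [pow_succ', Matrix.mul_apply, Finset.sum_mul, Finset.mul_sum]
      rw [Finset.sum_comm]
      congr 1; ext q; congr 1; ext q'; ring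
    rw [this]; ring

lemma fix_zero [Nonempty S] {M : Matrix S S ℝ} (hM : ∀ q, M q ∈ stdSimplex ℝ S)
    {γ : ℝ} (hγ0 : 0 ≤ γ) (hγ1 : γ < 1) (x : S → ℝ)
    (hx : ∀ q, x q = γ * ∑ q', M q q' * x q') (q : S) : x q = 0 := by
  obtain ⟨q0, -, hq0⟩ := Finset.exists_max_image Finset.univ (fun q => |x q|)
    ⟨Classical.arbitrary S, Finset.mem_univ _⟩
  have hb : |x q0| ≤ γ * |x q0| := by
    calc |x q0| = γ * |∑ q', M q0 q' * x q'| := by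
          rw [hx q0, abs_mul, abs_of_nonneg hγ0]
      _ ≤ γ * ∑ q', M q0 q' * |x q0| := by
          refine mul_le_mul_of_nonneg_left ?_ hγ0
          calc |∑ q', M q0 q' * x q'| ≤ ∑ q', |M q0 q' * x q'| := Finset.abs_sum_le_sum_abs _ _
            _ ≤ ∑ q', M q0 q' * |x q0| := by
                refine Finset.sum_le_sum fun q' _ => ?_
                rw [abs_mul, abs_of_nonneg ((hM q0).1 q')]
                exact mul_le_mul_of_nonneg_left (hq0 q' (Finset.mem_univ _)) ((hM q0).1 q')
      _ = γ * |x q0| := by rw [← Finset.sum_mul, (hM q0).2, one_mul]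
  have h0 : |x q0| = 0 := by nlinarith [abs_nonneg (x q0)]
  have := hq0 q (Finset.mem_univ q)
  rw [h0] at this
  exact abs_nonpos_iff.mp this

lemma bellman {P : S → A → S → ℝ} {c : S → A → ℝ} {h : S → (A → ℝ) → ℝ}
    {γ : ℝ} {μ : S → A → ℝ} (hP : IsKernel P) (hμ : IsPolicy μ)
    (hγ0 : 0 ≤ γ) (hγ1 : γ < 1) (s : S) :
    valueV P c h γ μ s = ((∑ a, μ s a * c s a) + h s (μ s)) +
      γ * ∑ q, polMatrix P μ s q * valueV P c h γ μ q :=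
  tsum_shift_eq (polMatrix_row_mem hP hμ) hγ0 hγ1
    (fun q => (∑ a, μ q a * c q a) + h q (μ q)) s

end Helpers

theorem gap_lower_bounds_optimality_gap {S A : Type*} [Fintype S] [Fintype A] [DecidableEq S]
    (P : S → A → S → ℝ) (c : S → A → ℝ) (h : S → (A → ℝ) → ℝ) (γ : ℝ)
    (π πstar : S → A → ℝ)
    (hP : IsKernel P) (hπ : IsPolicy π) (hstar : IsPolicy πstar)
    (hγ0 : 0 ≤ γ) (hγ1 : γ < 1)
    (hconv : ∀ s : S, ConvexOn ℝ (stdSimplex ℝ A) (h s))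
    (hopt : ∀ π'' : S → A → ℝ, IsPolicy π'' →
      ∀ s : S, valueV P c h γ πstar s ≤ valueV P c h γ π'' s) :
    ∀ s : S, gapFn P c h γ π s ≤ valueV P c h γ π s - valueV P c h γ πstar s := by
  classical
  intro s
  have hRHS : 0 ≤ valueV P c h γ π s - valueV P c h γ πstar s := sub_nonneg.2 (hopt π hπ s)
  refine Real.sSup_le ?_ hRHS
  rintro x ⟨p, hp, rfl⟩
  show -adv P c h γ π s p ≤ valueV P c h γ π s - valueV P c h γ πstar s
  -- set up the deviation policy
  set π' : S → A → ℝ := Function.update π s p with hπ'def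
  have hπ's : π' s = p := Function.update_self _ _ _
  have hπ'ne : ∀ q, q ≠ s → π' q = π q := fun q hq => Function.update_of_ne hq _ _
  have hπ' : IsPolicy π' := by
    intro q
    by_cases hq : q = s
    · rw [hq, hπ's]; exact hp
    · rw [hπ'ne q hq]; exact hπ q
  set M' : Matrix S S ℝ := polMatrix P π' with hM'def
  have hM' : ∀ q, M' q ∈ stdSimplex ℝ S := polMatrix_row_mem hP hπ'
  set V : S → ℝ := valueV P c h γ π with hVdef
  set V' : S → ℝ := valueV P c h γ π' with hV'def
  set ψ : ℝ := adv P c h γ π s p with hψdef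
  -- Key 1 : one-step deviation identity
  have key1 : ∀ q, ((∑ a, π' q a * c q a) + h q (π' q)) + γ * ∑ q', M' q q' * V q' - V q
      = if q = s then ψ else 0 := by
    intro q
    by_cases hq : q = s
    · subst hq
      rw [if_pos rfl, hπ's]
      have hMrow : ∀ q', M' q q' = ∑ a, p a * P q a q' := by
        intro q'
        show ∑ a, π' q a * P q a q' = _
        rw [hπ's]
      have e2 : ∑ q', (∑ a, p a * P q a q') * V q' = ∑ a, p a * ∑ s', P q a s' * V s' := by
        simp only [Finset.sum_mul, Finset.mul_sum]
        rw [Finset.sum_comm]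
        congr 1; ext a; congr 1; ext q'; ring
      have eq1 : ∑ a, valueQ P c h γ π q a * p a
          = (∑ a, p a * c q a) + h q (π q) + γ * ∑ a, p a * ∑ s', P q a s' * V s' := by
        show ∑ a, (c q a + h q (π q) + γ * ∑ s', P q a s' * V s') * p a = _
        simp only [add_mul, Finset.sum_add_distrib]
        congr 1
        · congr 1
          · exact Finset.sum_congr rfl fun a _ => mul_comm _ _
          · rw [← Finset.mul_sum, hp.2, mul_one]
        · rw [Finset.mul_sum]
          exact Finset.sum_congr rfl fun a _ => by ring
      have hadv : ψ = (∑ a, valueQ P c h γ π q a * p a) - V q + h q p - h q (π q) := rfl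
      rw [hadv, eq1]
      have e3 : ∑ q', M' q q' * V q' = ∑ a, p a * ∑ s', P q a s' * V s' := by
        rw [← e2]
        exact Finset.sum_congr rfl fun q' _ => by rw [hMrow q']
      rw [e3]
      ring
    · rw [if_neg hq, hπ'ne q hq]
      have hMrow : ∀ q', M' q q' = polMatrix P π q q' := by
        intro q'
        show ∑ a, π' q a * P q a q' = _
        rw [hπ'ne q hq]; rfl
      have hB := bellman (c := c) (h := h) (μ := π) hP hπ hγ0 hγ1 q
      have e3 : ∑ q', M' q q' * V q' = ∑ q', polMatrix P π q q' * V q' :=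
        Finset.sum_congr rfl fun q' _ => by rw [hMrow q']
      rw [e3]
      rw [hVdef]
      linarith [hB]
  -- Bellman for π'
  have key2 : ∀ q, V' q = ((∑ a, π' q a * c q a) + h q (π' q)) + γ * ∑ q', M' q q' * V' q' :=
    fun q => bellman hP hπ' hγ0 hγ1 q
  -- D satisfies the recursion
  set D : S → ℝ := fun q => V q - V' q with hDdef
  have hD : ∀ q, D q = -(if q = s then ψ else 0) + γ * ∑ q', M' q q' * D q' := by
    intro q
    have h3 : ∑ q', M' q q' * D q' = (∑ q', M' q q' * V q') - ∑ q', M' q q' * V' q' := by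
      rw [← Finset.sum_sub_distrib]
      exact Finset.sum_congr rfl fun q' _ => mul_sub _ _ _
    have h4 : γ * ((∑ q', M' q q' * V q') - ∑ q', M' q q' * V' q')
        = γ * ∑ q', M' q q' * V q' - γ * ∑ q', M' q q' * V' q' := mul_sub _ _ _
    show V q - V' q = _
    rw [h3, h4]
    linarith [key1 q, key2 q]
  -- F satisfies the same recursion
  set F : S → ℝ := fun q => -ψ * ∑' t : ℕ, γ ^ t * (M' ^ t) q s with hFdef
  have hsm : ∀ q', Summable fun t : ℕ => γ ^ t * (M' ^ t) q' s :=
    fun q' => summable_entry hM' hγ0 hγ1 q' s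
  have hF : ∀ q, F q = -(if q = s then ψ else 0) + γ * ∑ q', M' q q' * F q' := by
    intro q
    have e1 : ∑ q', M' q q' * F q' = -ψ * ∑ q', ∑' t : ℕ, M' q q' * (γ ^ t * (M' ^ t) q' s) := by
      rw [Finset.mul_sum]
      refine Finset.sum_congr rfl fun q' _ => ?_
      rw [tsum_mul_left (a := M' q q') (f := fun t : ℕ => γ ^ t * (M' ^ t) q' s)]
      show M' q q' * (-ψ * ∑' t : ℕ, γ ^ t * (M' ^ t) q' s) = _
      ring
    have e2 : ∑ q', ∑' t : ℕ, M' q q' * (γ ^ t * (M' ^ t) q' s)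
        = ∑' t : ℕ, ∑ q', M' q q' * (γ ^ t * (M' ^ t) q' s) :=
      (Summable.tsum_finsetSum fun q' _ => (hsm q').mul_left _).symm
    have e3 : ∀ t : ℕ, ∑ q', M' q q' * (γ ^ t * (M' ^ t) q' s) = γ ^ t * (M' ^ (t+1)) q s := by
      intro t
      rw [pow_succ', Matrix.mul_apply, Finset.mul_sum]
      exact Finset.sum_congr rfl fun q' _ => by ring
    have step : γ * ∑ q', M' q q' * F q' = -ψ * ∑' t : ℕ, γ ^ (t+1) * (M' ^ (t+1)) q s := by
      rw [e1, e2]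
      simp only [e3]
      calc γ * (-ψ * ∑' t : ℕ, γ ^ t * (M' ^ (t+1)) q s)
          = -ψ * ∑' t : ℕ, γ * (γ ^ t * (M' ^ (t+1)) q s) := by rw [tsum_mul_left]; ring
        _ = -ψ * ∑' t : ℕ, γ ^ (t+1) * (M' ^ (t+1)) q s := by
            congr 1
            exact tsum_congr fun t => by rw [pow_succ]; ring
    have split : (∑' t : ℕ, γ ^ t * (M' ^ t) q s)
        = (if q = s then (1:ℝ) else 0) + ∑' t : ℕ, γ ^ (t+1) * (M' ^ (t+1)) q s := by
      rw [Summable.tsum_eq_zero_add (hsm q)]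
      congr 1
      simp [Matrix.one_apply]
    rw [step]
    show -ψ * ∑' t : ℕ, γ ^ t * (M' ^ t) q s = _
    rw [split, mul_add]
    split_ifs <;> ring
  -- D = F by uniqueness
  have : Nonempty S := ⟨s⟩
  have hx : ∀ q, (fun q => D q - F q) q = γ * ∑ q', M' q q' * (fun q => D q - F q) q' := by
    intro q
    have h4 : ∑ q', M' q q' * (D q' - F q') = ∑ q', M' q q' * D q' - ∑ q', M' q q' * F q' := by
      rw [← Finset.sum_sub_distrib]
      exact Finset.sum_congr rfl fun q' _ => mul_sub _ _ _
    simp only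
    rw [h4, mul_sub]
    linarith [hD q, hF q]
  have hDF : D s = F s := sub_eq_zero.mp (fix_zero hM' hγ0 hγ1 _ hx s)
  -- K ≥ 1
  have hK1 : (1:ℝ) ≤ ∑' t : ℕ, γ ^ t * (M' ^ t) s s := by
    have := Summable.le_tsum (hsm s) 0
      (fun j _ => mul_nonneg (pow_nonneg hγ0 j) ((row_mem_pow hM' j s).1 s))
    simpa [Matrix.one_apply] using this
  -- conclude
  have hVs : valueV P c h γ πstar s ≤ V' s := hopt π' hπ' s
  have hDFs : V s - V' s = -ψ * ∑' t : ℕ, γ ^ t * (M' ^ t) s s := hDF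
  rcases le_or_gt 0 ψ with hψ0 | hψ0
  · linarith
  · have h5 : -ψ ≤ -ψ * ∑' t : ℕ, γ ^ t * (M' ^ t) s s :=
      le_mul_of_one_le_right (by linarith) hK1
    linarith
end

section
/- Non-optimal action detection: let π be a policy on a finite discounted unregularized MDP with positive initial distribution ρ and optimality gap f_ρ(π) − f_ρ(π*) > 0, where f_ρ(π) = ∑_s ρ(s) V^π(s). Then there exists a state-action pair (s̄, ā) with π(ā|s̄) > 0, π*(ā|s̄) = 0, and A^{π*}(s̄, ā) ≥ ((1−γ)/(|S||A|))·(f_ρ(π) − f_ρ(π*)), where A^{π*}(s,a) := Q^{π*}(s,a) − V^{π*}(s). -/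
open scoped BigOperators
set_option linter.unusedSectionVars false
set_option linter.unusedVariables false
set_option maxHeartbeats 1000000

section MDP

variable {S A : Type*} [Fintype S] [Fintype A] [DecidableEq S]

section Aux2

variable {P : S → A → S → ℝ} {π : S → A → ℝ}

lemma pm_nonneg (hP : IsKernel P) (hπ : IsPolicy π) (q s' : S) : 0 ≤ polMatrix P π q s' := by
  refine Finset.sum_nonneg fun a _ => mul_nonneg ((hπ q).1 a) ((hP q a).1 s')

lemma pm_rowsum (hP : IsKernel P) (hπ : IsPolicy π) (q : S) : ∑ s', polMatrix P π q s' = 1 := by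
  simp only [polMatrix, Matrix.of_apply]
  rw [Finset.sum_comm]
  simp only [← Finset.mul_sum]
  calc ∑ a, π q a * ∑ s', P q a s' = ∑ a, π q a := by
        refine Finset.sum_congr rfl fun a _ => by rw [(hP q a).2, mul_one]
    _ = 1 := (hπ q).2

lemma pmpow_nonneg (hP : IsKernel P) (hπ : IsPolicy π) (t : ℕ) (q s' : S) : 0 ≤ (polMatrix P π ^ t) q s' := by
  induction t generalizing q s' with
  | zero => simp [Matrix.one_apply]; positivity
  | succ n ih =>
    rw [pow_succ', Matrix.mul_apply]
    exact Finset.sum_nonneg fun p _ => mul_nonneg (pm_nonneg hP hπ _ _) (ih _ _)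

lemma pmpow_rowsum (hP : IsKernel P) (hπ : IsPolicy π) (t : ℕ) (q : S) : ∑ s', (polMatrix P π ^ t) q s' = 1 := by
  induction t generalizing q with
  | zero => simp [Matrix.one_apply]
  | succ n ih =>
    simp only [pow_succ', Matrix.mul_apply]
    rw [Finset.sum_comm]
    simp only [← Finset.mul_sum]
    calc ∑ p, polMatrix P π q p * ∑ s', (polMatrix P π ^ n) p s'
        = ∑ p, polMatrix P π q p := Finset.sum_congr rfl fun p _ => by rw [ih, mul_one]
      _ = 1 := pm_rowsum hP hπ q

lemma pmpow_dot_le (hP : IsKernel P) (hπ : IsPolicy π) {v : S → ℝ} {C : ℝ} (hv : ∀ s, v s ≤ C) (t : ℕ) (q : S) :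
    ∑ s', (polMatrix P π ^ t) q s' * v s' ≤ C := by
  calc ∑ s', (polMatrix P π ^ t) q s' * v s'
      ≤ ∑ s', (polMatrix P π ^ t) q s' * C :=
        Finset.sum_le_sum fun s' _ => mul_le_mul_of_nonneg_left (hv s') (pmpow_nonneg hP hπ t q s')
    _ = C := by rw [← Finset.sum_mul, pmpow_rowsum hP hπ, one_mul]

lemma pmpow_dot_ge (hP : IsKernel P) (hπ : IsPolicy π) {v : S → ℝ} {C : ℝ} (hv : ∀ s, C ≤ v s) (t : ℕ) (q : S) :
    C ≤ ∑ s', (polMatrix P π ^ t) q s' * v s' := by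
  have := pmpow_dot_le hP hπ (v := fun s => - v s) (C := -C) (fun s => neg_le_neg (hv s)) t q
  simp only [mul_neg, Finset.sum_neg_distrib, neg_le_neg_iff] at this
  linarith [this]


noncomputable def core (P : S → A → S → ℝ) (π : S → A → ℝ) (γ : ℝ) (v : S → ℝ) (s : S) : ℝ :=
  ∑' t : ℕ, γ ^ t * ∑ q, (polMatrix P π ^ t) s q * v q

variable {γ : ℝ}

lemma core_summable (hP : IsKernel P) (hπ : IsPolicy π) (hγ0 : 0 ≤ γ) (hγ1 : γ < 1)
    (v : S → ℝ) (s : S) :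
    Summable (fun t : ℕ => γ ^ t * ∑ q, (polMatrix P π ^ t) s q * v q) := by
  obtain ⟨C, hC⟩ : ∃ C : ℝ, ∀ q, |v q| ≤ C := ⟨∑ q, |v q|, fun q =>
    Finset.single_le_sum (f := fun q => |v q|) (fun i _ => abs_nonneg _) (Finset.mem_univ q)⟩
  refine Summable.of_norm ?_
  have hsum : Summable (fun t : ℕ => γ ^ t * C) := (summable_geometric_of_lt_one hγ0 hγ1).mul_right C
  refine Summable.of_nonneg_of_le (fun t => norm_nonneg _) (fun t => ?_) hsum
  have h1 : |∑ q, (polMatrix P π ^ t) s q * v q| ≤ C := by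
    refine abs_le.2 ⟨?_, ?_⟩
    · exact pmpow_dot_ge hP hπ (fun q => neg_le_of_abs_le (hC q)) t s
    · exact pmpow_dot_le hP hπ (fun q => le_of_abs_le (hC q)) t s
  calc ‖γ ^ t * ∑ q, (polMatrix P π ^ t) s q * v q‖
      = γ ^ t * |∑ q, (polMatrix P π ^ t) s q * v q| := by
        rw [Real.norm_eq_abs, abs_mul, abs_of_nonneg (pow_nonneg hγ0 t)]
    _ ≤ γ ^ t * C := mul_le_mul_of_nonneg_left h1 (pow_nonneg hγ0 t)

lemma core_bellman (hP : IsKernel P) (hπ : IsPolicy π) (hγ0 : 0 ≤ γ) (hγ1 : γ < 1)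
    (v : S → ℝ) (s : S) :
    core P π γ v s = v s + γ * ∑ p, polMatrix P π s p * core P π γ v p := by
  have hs := core_summable hP hπ hγ0 hγ1 v s
  rw [core, Summable.tsum_eq_zero_add hs]
  simp only [pow_zero, one_mul]
  have h0 : ∑ x : S, (1 : Matrix S S ℝ) s x * v x = v s := by simp [Matrix.one_apply]
  rw [h0]
  congr 1
  have hterm : ∀ t : ℕ, γ ^ (t+1) * ∑ q, (polMatrix P π ^ (t+1)) s q * v q
      = γ * ∑ p, polMatrix P π s p * (γ ^ t * ∑ q, (polMatrix P π ^ t) p q * v q) := by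
    intro t
    simp only [pow_succ', Matrix.mul_apply, Finset.sum_mul, Finset.mul_sum]
    rw [Finset.sum_comm]
    exact Finset.sum_congr rfl fun p _ => Finset.sum_congr rfl fun q _ => by ring
  calc ∑' t : ℕ, γ ^ (t+1) * ∑ q, (polMatrix P π ^ (t+1)) s q * v q
      = ∑' t : ℕ, γ * ∑ p, polMatrix P π s p * (γ ^ t * ∑ q, (polMatrix P π ^ t) p q * v q) := by
        exact tsum_congr hterm
    _ = γ * ∑ p, polMatrix P π s p * core P π γ v p := by
        rw [tsum_mul_left]
        congr 1
        simp only [core, ← tsum_mul_left]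
        exact Summable.tsum_finsetSum (fun p _ => ((core_summable hP hπ hγ0 hγ1 v p).mul_left _))


lemma fixed_unique (hP : IsKernel P) (hπ : IsPolicy π) (hγ0 : 0 ≤ γ) (hγ1 : γ < 1)
    {v W W' : S → ℝ}
    (hW : ∀ s, W s = v s + γ * ∑ p, polMatrix P π s p * W p)
    (hW' : ∀ s, W' s = v s + γ * ∑ p, polMatrix P π s p * W' p) :
    ∀ s, W s = W' s := by
  intro s0
  set e : S → ℝ := fun s => W s - W' s with he
  obtain ⟨sm, -, hsm⟩ := Finset.exists_max_image Finset.univ (fun s => |e s|)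
    ⟨s0, Finset.mem_univ s0⟩
  have hee : ∀ s, e s = γ * ∑ p, polMatrix P π s p * e p := by
    intro s
    have : W s - W' s = γ * ((∑ p, polMatrix P π s p * W p) - ∑ p, polMatrix P π s p * W' p) := by
      rw [hW s, hW' s]; ring
    simpa [he, ← Finset.sum_sub_distrib, mul_sub] using this
  have hb : |e sm| ≤ γ * |e sm| := by
    calc |e sm| = γ * |∑ p, polMatrix P π sm p * e p| := by
          rw [hee sm, abs_mul, abs_of_nonneg hγ0]
      _ ≤ γ * |e sm| := by
          refine mul_le_mul_of_nonneg_left ?_ hγ0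
          calc |∑ p, polMatrix P π sm p * e p| ≤ ∑ p, |polMatrix P π sm p * e p| :=
                Finset.abs_sum_le_sum_abs _ _
            _ = ∑ p, polMatrix P π sm p * |e p| := by
                refine Finset.sum_congr rfl fun p _ => ?_
                rw [abs_mul, abs_of_nonneg (pm_nonneg hP hπ sm p)]
            _ ≤ ∑ p, polMatrix P π sm p * |e sm| :=
                Finset.sum_le_sum fun p _ =>
                  mul_le_mul_of_nonneg_left (hsm p (Finset.mem_univ p)) (pm_nonneg hP hπ sm p)
            _ = |e sm| := by rw [← Finset.sum_mul, pm_rowsum hP hπ, one_mul]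
  have hzero : |e sm| = 0 := by nlinarith [abs_nonneg (e sm)]
  have : |e s0| ≤ 0 := hzero ▸ hsm s0 (Finset.mem_univ s0)
  have : e s0 = 0 := abs_eq_zero.mp (le_antisymm this (abs_nonneg _))
  simpa [he, sub_eq_zero] using this


variable {c : S → A → ℝ}

lemma valueV_eq_core (s : S) :
    valueV P c (fun _ _ => 0) γ π s = core P π γ (fun q => ∑ a, π q a * c q a) s := by
  simp [valueV, core]

lemma valueV_bellman (hP : IsKernel P) (hπ : IsPolicy π) (hγ0 : 0 ≤ γ) (hγ1 : γ < 1) (s : S) :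
    valueV P c (fun _ _ => 0) γ π s = (∑ a, π s a * c s a)
      + γ * ∑ p, polMatrix P π s p * valueV P c (fun _ _ => 0) γ π p := by
  simp only [valueV_eq_core]
  exact core_bellman hP hπ hγ0 hγ1 _ s

/-- `d s = ∑_a π(a|s) A^{π*}(s,a)` rewritten via the induced matrix. -/
lemma dvec_eq (hP : IsKernel P) (hπ : IsPolicy π) {μ : S → A → ℝ} (s : S) :
    ∑ a, π s a * (valueQ P c (fun _ _ => 0) γ μ s a - valueV P c (fun _ _ => 0) γ μ s)
      = (∑ a, π s a * c s a)
        + γ * (∑ p, polMatrix P π s p * valueV P c (fun _ _ => 0) γ μ p)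
        - valueV P c (fun _ _ => 0) γ μ s := by
  simp only [valueQ, add_zero]
  have expand : ∀ a, π s a * (c s a + γ * ∑ s', P s a s' * valueV P c (fun _ _ => 0) γ μ s'
        - valueV P c (fun _ _ => 0) γ μ s)
      = π s a * c s a + γ * (∑ s', (π s a * P s a s') * valueV P c (fun _ _ => 0) γ μ s')
        - π s a * valueV P c (fun _ _ => 0) γ μ s := by
    intro a
    simp only [mul_sub, mul_add, Finset.mul_sum]
    ring_nf
  rw [Finset.sum_congr rfl (fun a _ => expand a)]
  rw [Finset.sum_sub_distrib, Finset.sum_add_distrib, ← Finset.sum_mul, (hπ s).2, one_mul]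
  congr 2
  rw [← Finset.mul_sum]
  congr 1
  rw [Finset.sum_comm]
  simp only [polMatrix, Matrix.of_apply, Finset.sum_mul]

/-- Performance difference lemma. -/
lemma perf_diff (hP : IsKernel P) (hπ : IsPolicy π) {μ : S → A → ℝ} (hμ : IsPolicy μ)
    (hγ0 : 0 ≤ γ) (hγ1 : γ < 1) :
    ∀ s, valueV P c (fun _ _ => 0) γ π s - valueV P c (fun _ _ => 0) γ μ s
      = core P π γ (fun q => ∑ a, π q a *
          (valueQ P c (fun _ _ => 0) γ μ q a - valueV P c (fun _ _ => 0) γ μ q)) s := by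
  refine fixed_unique hP hπ hγ0 hγ1 (v := fun q => ∑ a, π q a *
    (valueQ P c (fun _ _ => 0) γ μ q a - valueV P c (fun _ _ => 0) γ μ q)) ?_ ?_
  · intro s
    have h1 := valueV_bellman (c := c) hP hπ hγ0 hγ1 s
    have h2 := dvec_eq (γ := γ) (c := c) hP hπ (μ := μ) s
    have h3 : ∑ p, polMatrix P π s p *
        (valueV P c (fun _ _ => 0) γ π p - valueV P c (fun _ _ => 0) γ μ p)
        = (∑ p, polMatrix P π s p * valueV P c (fun _ _ => 0) γ π p)
          - ∑ p, polMatrix P π s p * valueV P c (fun _ _ => 0) γ μ p := by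
      rw [← Finset.sum_sub_distrib]
      exact Finset.sum_congr rfl fun p _ => by ring
    rw [h3]
    beta_reduce
    rw [h2, h1]
    ring
  · intro s
    exact core_bellman hP hπ hγ0 hγ1 _ s


lemma dstar_zero (hP : IsKernel P) {πstar : S → A → ℝ} (hstar : IsPolicy πstar)
    (hγ0 : 0 ≤ γ) (hγ1 : γ < 1) (q : S) :
    ∑ a, πstar q a * (valueQ P c (fun _ _ => 0) γ πstar q a
      - valueV P c (fun _ _ => 0) γ πstar q) = 0 := by
  rw [dvec_eq (π := πstar) (γ := γ) (c := c) hP hstar (μ := πstar) q]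
  have := valueV_bellman (π := πstar) (c := c) hP hstar hγ0 hγ1 q
  linarith

lemma adv_nonneg (hP : IsKernel P) {πstar : S → A → ℝ} (hstar : IsPolicy πstar)
    (hγ0 : 0 ≤ γ) (hγ1 : γ < 1)
    (hopt : ∀ π'' : S → A → ℝ, IsPolicy π'' →
      ∀ s : S, valueV P c (fun _ _ => 0) γ πstar s ≤ valueV P c (fun _ _ => 0) γ π'' s)
    (sb : S) (ab : A) :
    0 ≤ valueQ P c (fun _ _ => 0) γ πstar sb ab - valueV P c (fun _ _ => 0) γ πstar sb := by
  classical
  by_contra hneg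
  push_neg at hneg
  set π'' : S → A → ℝ := fun s a => if s = sb then (if a = ab then 1 else 0) else πstar s a
    with hπ''
  have hpol : IsPolicy π'' := by
    intro s
    by_cases hs : s = sb
    · subst hs
      constructor
      · intro a; simp only [hπ'', if_pos rfl]; split <;> norm_num
      · simp [hπ'']
    · constructor
      · intro a; simp only [hπ'', if_neg hs]; exact (hstar s).1 a
      · simp only [hπ'', if_neg hs]; exact (hstar s).2
  have hpd := perf_diff (π := π'') (c := c) hP hpol (μ := πstar) hstar hγ0 hγ1 sb
  set d : S → ℝ := fun q => ∑ a, π'' q a *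
    (valueQ P c (fun _ _ => 0) γ πstar q a - valueV P c (fun _ _ => 0) γ πstar q) with hd
  have hdsb : d sb = valueQ P c (fun _ _ => 0) γ πstar sb ab
      - valueV P c (fun _ _ => 0) γ πstar sb := by
    simp [hd, hπ'', ite_mul, Finset.sum_ite_eq']
  have hdle : ∀ q, d q ≤ 0 := by
    intro q
    by_cases hq : q = sb
    · subst hq; rw [hdsb]; linarith
    · have : d q = 0 := by
        simp only [hd, hπ'', if_neg hq]
        exact dstar_zero (c := c) hP hstar hγ0 hγ1 q
      linarith
  have hcore : core P π'' γ d sb ≤ d sb := by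
    have hs := core_summable (π := π'') hP hpol hγ0 hγ1 d sb
    rw [core, Summable.tsum_eq_zero_add hs]
    have h0 : γ ^ 0 * ∑ q, (polMatrix P π'' ^ 0) sb q * d q = d sb := by
      simp [Matrix.one_apply]
    rw [h0]
    have htail : ∑' t : ℕ, γ ^ (t+1) * ∑ q, (polMatrix P π'' ^ (t+1)) sb q * d q ≤ 0 := by
      refine tsum_nonpos fun t => ?_
      refine mul_nonpos_of_nonneg_of_nonpos (pow_nonneg hγ0 _) ?_
      exact pmpow_dot_le hP hpol hdle (t+1) sb
    linarith
  have hge := hopt π'' hpol sb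
  rw [hdsb] at hcore
  linarith [hpd, hge, hcore, hneg]

end Aux2

end MDP

/-- Non-optimal action detection on a finite unregularized discounted MDP:
if `f_ρ(π) − f_ρ(π*) > 0` for a positive initial distribution `ρ`, then there is a
state-action pair `(s̄,ā)` with `π(ā|s̄) > 0`, `π*(ā|s̄) = 0`, and
`A^{π*}(s̄,ā) ≥ ((1−γ)/(|S||A|))·(f_ρ(π) − f_ρ(π*))`,
where `A^{π*}(s,a) = Q^{π*}(s,a) − V^{π*}(s)` and `f_ρ(π) = ∑_s ρ(s) V^π(s)`. -/
theorem nonoptimal_action_detection {S A : Type*} [Fintype S] [Fintype A] [DecidableEq S]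
    (P : S → A → S → ℝ) (c : S → A → ℝ) (γ : ℝ) (ρ : S → ℝ)
    (π πstar : S → A → ℝ)
    (hP : IsKernel P) (hπ : IsPolicy π) (hstar : IsPolicy πstar)
    (hγ0 : 0 ≤ γ) (hγ1 : γ < 1)
    (hρpos : ∀ s : S, 0 < ρ s) (hρ1 : ∑ s : S, ρ s = 1)
    (hopt : ∀ π'' : S → A → ℝ, IsPolicy π'' →
      ∀ s : S, valueV P c (fun _ _ => 0) γ πstar s ≤ valueV P c (fun _ _ => 0) γ π'' s)
    (hgap : ∑ s : S, ρ s * valueV P c (fun _ _ => 0) γ πstar s <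
      ∑ s : S, ρ s * valueV P c (fun _ _ => 0) γ π s) :
    ∃ sb : S, ∃ ab : A,
      0 < π sb ab ∧ πstar sb ab = 0 ∧
        ((1 - γ) / ((Fintype.card S : ℝ) * (Fintype.card A : ℝ))) *
            (∑ s : S, ρ s * valueV P c (fun _ _ => 0) γ π s -
              ∑ s : S, ρ s * valueV P c (fun _ _ => 0) γ πstar s) ≤
          valueQ P c (fun _ _ => 0) γ πstar sb ab - valueV P c (fun _ _ => 0) γ πstar sb := by
  classical
  -- notation
  set Vf := valueV P c (fun _ _ => 0) γ with hVf
  -- S nonempty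
  rcases isEmpty_or_nonempty S with hS | hS
  · simp [Finset.univ_eq_empty] at hgap
  have hs0 : Nonempty S := hS
  obtain ⟨s0⟩ := hs0
  have hA : Nonempty A := by
    by_contra hA
    have hAe : IsEmpty A := not_nonempty_iff.mp hA
    have h2 := (hπ s0).2
    rw [Finset.univ_eq_empty] at h2
    simp at h2
  obtain ⟨a0⟩ := hA
  -- gap
  set G : ℝ := ∑ s : S, ρ s * Vf π s - ∑ s : S, ρ s * Vf πstar s with hG
  have hGpos : 0 < G := by simp only [hG]; linarith
  set Adv : S → A → ℝ := fun s a => valueQ P c (fun _ _ => 0) γ πstar s a - Vf πstar s with hAdv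
  have hAdvnn : ∀ s a, 0 ≤ Adv s a := fun s a => adv_nonneg hP hstar hγ0 hγ1 hopt s a
  set d : S → ℝ := fun q => ∑ a, π q a * Adv q a with hd
  have hdnn : ∀ q, 0 ≤ d q :=
    fun q => Finset.sum_nonneg fun a _ => mul_nonneg ((hπ q).1 a) (hAdvnn q a)
  -- performance difference
  have hpd : ∀ s, Vf π s - Vf πstar s = core P π γ d s := fun s =>
    perf_diff hP hπ hstar hγ0 hγ1 s
  -- max of d
  obtain ⟨sm, -, hsm⟩ := Finset.exists_max_image Finset.univ d ⟨s0, Finset.mem_univ s0⟩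
  set D : ℝ := d sm with hD
  -- core bound
  have hcb : ∀ s, core P π γ d s ≤ D * (1 - γ)⁻¹ := by
    intro s
    have hterm : ∀ t : ℕ, γ ^ t * ∑ q, (polMatrix P π ^ t) s q * d q ≤ γ ^ t * D := fun t =>
      mul_le_mul_of_nonneg_left
        (pmpow_dot_le hP hπ (fun q => hsm q (Finset.mem_univ q)) t s) (pow_nonneg hγ0 t)
    calc core P π γ d s ≤ ∑' t : ℕ, γ ^ t * D :=
          Summable.tsum_le_tsum hterm (core_summable hP hπ hγ0 hγ1 d s)
            ((summable_geometric_of_lt_one hγ0 hγ1).mul_right D)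
      _ = D * (1 - γ)⁻¹ := by
          rw [tsum_mul_right, tsum_geometric_of_lt_one hγ0 hγ1, mul_comm]
  -- G ≤ D/(1-γ)
  have hGle : G ≤ D * (1 - γ)⁻¹ := by
    have h1 : G = ∑ s, ρ s * (Vf π s - Vf πstar s) := by
      rw [hG, ← Finset.sum_sub_distrib]
      exact Finset.sum_congr rfl fun s _ => by ring
    calc G = ∑ s, ρ s * core P π γ d s := by
          rw [h1]; exact Finset.sum_congr rfl fun s _ => by rw [hpd s]
      _ ≤ ∑ s, ρ s * (D * (1 - γ)⁻¹) :=
          Finset.sum_le_sum fun s _ => mul_le_mul_of_nonneg_left (hcb s) (hρpos s).le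
      _ = D * (1 - γ)⁻¹ := by rw [← Finset.sum_mul, hρ1, one_mul]
  have h1γ : (0:ℝ) < 1 - γ := by linarith
  have hDge : (1 - γ) * G ≤ D := by
    rw [mul_comm]
    rw [← le_div_iff₀ h1γ] at *
    · calc G ≤ D * (1-γ)⁻¹ := hGle
        _ = D / (1-γ) := by rw [div_eq_mul_inv]
  -- choose maximizing action
  obtain ⟨ab, -, hab⟩ := Finset.exists_max_image Finset.univ (fun a => π sm a * Adv sm a)
    ⟨a0, Finset.mem_univ a0⟩
  set T : ℝ := π sm ab * Adv sm ab with hT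
  have cApos : (0:ℝ) < (Fintype.card A : ℝ) := by
    exact_mod_cast Fintype.card_pos_iff.mpr ⟨a0⟩
  have cSge1 : (1:ℝ) ≤ (Fintype.card S : ℝ) := by
    exact_mod_cast Fintype.card_pos_iff.mpr ⟨s0⟩
  have hDT : D ≤ (Fintype.card A : ℝ) * T := by
    calc D = ∑ a, π sm a * Adv sm a := rfl
      _ ≤ Fintype.card A • T := by
          refine Finset.sum_le_card_nsmul Finset.univ _ T fun a _ => hab a (Finset.mem_univ a)
      _ = (Fintype.card A : ℝ) * T := by rw [nsmul_eq_mul]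
  have hTpos : 0 < T := by nlinarith
  have hπpos : 0 < π sm ab := by
    rcases ((hπ sm).1 ab).lt_or_eq with h | h
    · exact h
    · exfalso; rw [hT, ← h, zero_mul] at hTpos; exact lt_irrefl _ hTpos
  have hπle1 : π sm ab ≤ 1 := by
    have := Finset.single_le_sum (f := fun a => π sm a) (fun a _ => (hπ sm).1 a)
      (Finset.mem_univ ab)
    rw [(hπ sm).2] at this; exact this
  have hTA : T ≤ Adv sm ab := by
    calc T = π sm ab * Adv sm ab := rfl
      _ ≤ 1 * Adv sm ab := mul_le_mul_of_nonneg_right hπle1 (hAdvnn sm ab)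
      _ = Adv sm ab := one_mul _
  have hApos : 0 < Adv sm ab := lt_of_lt_of_le hTpos hTA
  -- complementary slackness
  have hslack : πstar sm ab = 0 := by
    have hz := dstar_zero (c := c) hP hstar hγ0 hγ1 sm
    have hterm0 : ∀ a ∈ Finset.univ, (0:ℝ) ≤ πstar sm a *
        (valueQ P c (fun _ _ => 0) γ πstar sm a - valueV P c (fun _ _ => 0) γ πstar sm) :=
      fun a _ => mul_nonneg ((hstar sm).1 a) (hAdvnn sm a)
    have := (Finset.sum_eq_zero_iff_of_nonneg hterm0).mp hz ab (Finset.mem_univ ab)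
    rcases mul_eq_zero.mp this with h | h
    · exact h
    · exfalso
      have : Adv sm ab = 0 := h
      rw [this] at hApos; exact lt_irrefl _ hApos
  refine ⟨sm, ab, hπpos, hslack, ?_⟩
  show ((1 - γ) / ((Fintype.card S : ℝ) * (Fintype.card A : ℝ))) * G ≤ Adv sm ab
  rw [div_mul_eq_mul_div, div_le_iff₀ (by positivity)]
  have key : (1 - γ) * G ≤ (Fintype.card A : ℝ) * Adv sm ab := by
    calc (1 - γ) * G ≤ D := hDge
      _ ≤ (Fintype.card A : ℝ) * T := hDT
      _ ≤ (Fintype.card A : ℝ) * Adv sm ab := mul_le_mul_of_nonneg_left hTA cApos.le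
  nlinarith [mul_le_mul_of_nonneg_right key (le_trans zero_le_one cSge1 : (0:ℝ) ≤ _),
    mul_nonneg cApos.le hApos.le]
end
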